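/- Let $\preceq$ denote the modified Bruhat order on $\mathbb{Z}^n$ defined by $\lambda \preceq \mu$ iff $-\lambda \le -\mu$ in the Bruhat order induced from the extended affine Weyl group. If $\mu \in \mathbb{N}^n$ and $\lambda \in \mathbb{Z}^n$ satisfies $\lambda \preceq \mu$, then $\lambda \in \mathbb{N}^n$. -/

import Mathlib

/-- An element `t_τ ∘ u` of the extended affine Weyl group `W = Sₙ ⋉ ℤⁿ`
of type `A_{n-1}`:  `perm` is the finite part `u ∈ Sₙ`, `tr` the translation `τ`. -/
structure AffW (n : ℕ) where
  perm : Equiv.Perm (Fin n)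
  tr : Fin n → ℤ

namespace AffW

variable {n : ℕ}

/-- The affine action on `X = ℤⁿ` : `(t_τ u)(x) = u·x + τ` where `(u·x)_i = x_{u⁻¹ i}`. -/
def act (w : AffW n) (x : Fin n → ℤ) : Fin n → ℤ :=
  fun i => x (w.perm⁻¹ i) + w.tr i

/-- Group multiplication (composition of affine maps). -/
def mul (a b : AffW n) : AffW n :=
  ⟨a.perm * b.perm, fun i => b.tr (a.perm⁻¹ i) + a.tr i⟩

def one (n : ℕ) : AffW n := ⟨1, 0⟩

/-- An affine root `ε_i - ε_j + k`, recorded as the data `(i, j, k)`. -/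
abbrev Root (n : ℕ) := Fin n × Fin n × ℤ

/-- A positive affine root: `Δ⁺ = Δ_f⁺ ∪ (Δ_f + ℤ_{>0})`. -/
def IsPos (α : Root n) : Prop := 0 < α.2.2 ∨ (α.2.2 = 0 ∧ α.1 < α.2.1)

/-- A negative affine root. -/
def IsNeg (α : Root n) : Prop := IsPos (α.2.1, α.1, -α.2.2)

/-- Action of `w` on affine roots, determined by `(wα)(x) = α(w⁻¹x)`. -/
def rootAct (w : AffW n) (α : Root n) : Root n :=
  (w.perm α.1, w.perm α.2.1, α.2.2 - w.tr (w.perm α.1) + w.tr (w.perm α.2.1))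

/-- The length `ℓ(w) = #{α ∈ Δ⁺ ∣ wα ∈ -Δ⁺}`. -/
noncomputable def len (w : AffW n) : ℕ :=
  Set.ncard {α : Root n | IsPos α ∧ IsNeg (rootAct w α)}

/-- The affine reflection `s_{ε_i - ε_j + k}` as an element of `W`. -/
def refl (i j : Fin n) (k : ℤ) : AffW n :=
  ⟨Equiv.swap i j, fun m => if m = i then -k else if m = j then k else 0⟩

/-- Bruhat covering-type relation: right multiplication by a reflection which
increases the length. -/
def BruhatStep (a b : AffW n) : Prop :=
  (∃ i j k, i ≠ j ∧ b = mul a (refl i j k)) ∧ len a < len b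

/-- The Bruhat order on the extended affine Weyl group. -/
def BruhatLe : AffW n → AffW n → Prop := Relation.ReflTransGen BruhatStep

/-- `m_τ`, the shortest element of the coset `t_τ Sₙ`. -/
noncomputable def minRep (τ : Fin n → ℤ) : AffW n :=
  ⟨(Finset.exists_min_image (Finset.univ : Finset (Equiv.Perm (Fin n)))
      (fun u => len (⟨u, τ⟩ : AffW n)) ⟨1, Finset.mem_univ 1⟩).choose, τ⟩

/-- The Bruhat order on `X = ℤⁿ` induced from the extended affine Weyl group:
`τ ≤ η ↔ m_τ ≤ m_η`. -/
noncomputable def XLe (τ η : Fin n → ℤ) : Prop := BruhatLe (minRep τ) (minRep η)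

end AffW

/-!
The statistic `posMass τ = ∑ i, max τᵢ 0` is monotone along the Bruhat order of `W` and vanishes
exactly on `-ℕⁿ`; since `-μ ∈ -ℕⁿ` and `-λ ≤ -μ`, also `-λ ∈ -ℕⁿ`.

For a length-increasing step `w ↦ w s_α` with `α = ε_i - ε_j + k > 0` we must have `wα > 0`, by
the exchange property: `wα < 0` forces `ℓ(w s_α) ≤ ℓ(w)`. Then the step moves `k ≥ 0` from the
translation coordinate `p = u i` to `q = u j` with `τ_p - τ_q ≤ k`, which cannot decrease
`posMass`. The exchange property follows from the reflection formula `s_α γ = γ - ⟨γ, α^∨⟩ α`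
evaluated against the linear forms that decide the signs of `γ` and of `wγ`.
-/

namespace AffW

variable {n : ℕ}

/-- Pairing of the affine root `ε_a - ε_b + m δ` with the linear form `ε_x ↦ -g x`, `δ ↦ n`. -/
def pairing (g : Fin n → ℤ) (γ : Root n) : ℤ := n * γ.2.2 + (g γ.2.1 - g γ.1)

def height (γ : Root n) : ℤ := pairing (fun x => (x : ℤ)) γ

lemma isPos_iff_height_pos (γ : Root n) : IsPos γ ↔ 0 < height γ := by
  obtain ⟨a, b, m⟩ := γ
  have ha : (a : ℤ) < n := by exact_mod_cast a.2
  have hb : (b : ℤ) < n := by exact_mod_cast b.2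
  simp only [IsPos, height, pairing, Fin.lt_def]
  constructor
  · rintro (hm | ⟨rfl, hab⟩)
    · nlinarith
    · omega
  · intro h
    rcases lt_trichotomy m 0 with hm | rfl | hm
    · nlinarith
    · right; omega
    · exact Or.inl hm

lemma isNeg_iff_height_neg (γ : Root n) : IsNeg γ ↔ height γ < 0 := by
  rw [IsNeg, isPos_iff_height_pos]
  simp only [height, pairing]
  constructor <;> intro h <;> linarith

lemma isPos_or_isNeg {γ : Root n} (h : γ.1 ≠ γ.2.1) : IsPos γ ∨ IsNeg γ := by
  obtain ⟨a, b, m⟩ := γ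
  simp only [IsNeg, IsPos]
  rcases lt_trichotomy m 0 with hm | rfl | hm
  · right; left; omega
  · rcases lt_or_gt_of_ne h with hab | hab
    · exact Or.inl (Or.inr ⟨rfl, hab⟩)
    · exact Or.inr (Or.inr ⟨neg_zero, hab⟩)
  · exact Or.inl (Or.inl hm)

lemma pairing_rootAct (g : Fin n → ℤ) (w : AffW n) (γ : Root n) :
    pairing g (rootAct w γ) = pairing (fun x => n * w.tr (w.perm x) + g (w.perm x)) γ := by
  simp only [pairing, rootAct]
  ring

/-- The coefficient `⟨γ, α^∨⟩` in `s_α γ = γ - ⟨γ, α^∨⟩ α` for `α = ε_i - ε_j + k`. -/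
def corootPairing (i j : Fin n) (γ : Root n) : ℤ :=
  (if γ.1 = i then 1 else 0) - (if γ.1 = j then 1 else 0)
    - (if γ.2.1 = i then 1 else 0) + (if γ.2.1 = j then 1 else 0)

lemma pairing_rootAct_refl (g : Fin n → ℤ) {i j : Fin n} (hij : i ≠ j) (k : ℤ) (γ : Root n) :
    pairing g (rootAct (refl i j k) γ)
      = pairing g γ - corootPairing i j γ * pairing g (i, j, k) := by
  obtain ⟨a, b, m⟩ := γ
  simp only [pairing, rootAct, refl, corootPairing]
  by_cases hai : a = i <;> by_cases haj : a = j <;> by_cases hbi : b = i <;>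
    by_cases hbj : b = j <;>
      simp_all [Equiv.swap_apply_of_ne_of_ne, hij.symm] <;> ring

def inversionSet (w : AffW n) : Set (Root n) := {γ | IsPos γ ∧ IsNeg (rootAct w γ)}

lemma inversionSet_finite (w : AffW n) : (inversionSet w).Finite := by
  set S : ℕ := Finset.univ.sup (fun i => (w.tr i).natAbs)
  refine ((Set.finite_univ (α := Fin n)).prod
    ((Set.finite_univ (α := Fin n)).prod (Set.finite_Icc (0 : ℤ) (2 * S)))).subset ?_
  rintro ⟨a, b, m⟩ ⟨hpos, hneg⟩
  have ha : (w.tr (w.perm a)).natAbs ≤ S :=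
    Finset.le_sup (f := fun i => (w.tr i).natAbs) (Finset.mem_univ _)
  have hb : (w.tr (w.perm b)).natAbs ≤ S :=
    Finset.le_sup (f := fun i => (w.tr i).natAbs) (Finset.mem_univ _)
  simp only [IsPos, IsNeg, rootAct] at hpos hneg
  simp only [Set.mem_prod, Set.mem_univ, Set.mem_Icc, true_and]
  omega

lemma rootAct_mul (a b : AffW n) (γ : Root n) :
    rootAct (mul a b) γ = rootAct a (rootAct b γ) := by
  obtain ⟨x, y, m⟩ := γ
  simp only [rootAct, mul, Equiv.Perm.mul_apply, Equiv.Perm.inv_def, Equiv.symm_apply_apply,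
    Prod.mk.injEq, true_and]
  ring

lemma rootAct_refl_rootAct_refl {i j : Fin n} (hij : i ≠ j) (k : ℤ) (γ : Root n) :
    rootAct (refl i j k) (rootAct (refl i j k) γ) = γ := by
  obtain ⟨a, b, m⟩ := γ
  simp only [rootAct, refl, Equiv.swap_apply_self, Prod.mk.injEq, true_and]
  by_cases hai : a = i <;> by_cases haj : a = j <;> by_cases hbi : b = i <;>
    by_cases hbj : b = j <;>
      simp_all [Equiv.swap_apply_of_ne_of_ne, hij.symm]

lemma refl_symm {i j : Fin n} (hij : i ≠ j) (k : ℤ) : refl i j k = refl j i (-k) := by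
  simp only [refl, AffW.mk.injEq]
  refine ⟨Equiv.swap_comm i j, funext fun m => ?_⟩
  by_cases h1 : m = i <;> by_cases h2 : m = j <;> simp_all

lemma height_rootAct (w : AffW n) (γ : Root n) :
    height (rootAct w γ) = pairing (fun x => n * w.tr (w.perm x) + w.perm x) γ :=
  pairing_rootAct _ w γ

lemma height_rootAct_rootAct_refl (w : AffW n) {i j : Fin n} (hij : i ≠ j) (k : ℤ) (γ : Root n) :
    height (rootAct w (rootAct (refl i j k) γ))
      = height (rootAct w γ) - corootPairing i j γ * height (rootAct w (i, j, k)) := by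
  simp only [height_rootAct, pairing_rootAct_refl _ hij]

lemma isNeg_rootAct_of_isNeg_rootAct_rootAct_refl {w : AffW n} {i j : Fin n} (hij : i ≠ j)
    {k : ℤ} (hα : IsPos (i, j, k)) (hwα : IsNeg (rootAct w (i, j, k))) {γ : Root n}
    (hγ : IsPos γ) (hrγ : ¬ IsPos (rootAct (refl i j k) γ))
    (hwrγ : IsNeg (rootAct w (rootAct (refl i j k) γ))) : IsNeg (rootAct w γ) := by
  rw [isPos_iff_height_pos] at hα hγ hrγ
  rw [isNeg_iff_height_neg] at hwα hwrγ ⊢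
  have hc : 0 < corootPairing i j γ := by
    have := pairing_rootAct_refl (fun x => (x : ℤ)) hij k γ
    unfold height at hα hγ hrγ
    nlinarith
  rw [height_rootAct_rootAct_refl w hij] at hwrγ
  nlinarith

/-- `γ ↦ s_α γ` where `s_α γ > 0`, and the identity elsewhere, injects `inversionSet (w s_α)` into
`inversionSet w`: the two pieces land outside and inside `inversionSet s_α` respectively. -/
lemma len_mul_refl_le {w : AffW n} {i j : Fin n} (hij : i ≠ j) {k : ℤ}
    (hα : IsPos (i, j, k)) (hwα : IsNeg (rootAct w (i, j, k))) :
    len (mul w (refl i j k)) ≤ len w := by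
  classical
  have hinv := rootAct_refl_rootAct_refl hij k
  refine Set.ncard_le_ncard_of_injOn
    (fun γ => if IsPos (rootAct (refl i j k) γ) then rootAct (refl i j k) γ else γ) ?_ ?_
    (inversionSet_finite w)
  · rintro γ ⟨hγ, hwrγ⟩
    rw [rootAct_mul] at hwrγ
    split_ifs with hrγ
    · exact ⟨hrγ, hwrγ⟩
    · exact ⟨hγ, isNeg_rootAct_of_isNeg_rootAct_rootAct_refl hij hα hwα hγ hrγ hwrγ⟩
  · rintro γ₁ ⟨hγ₁, -⟩ γ₂ ⟨hγ₂, -⟩ h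
    dsimp only at h
    split_ifs at h with h₁ h₂ h₂
    · rw [← hinv γ₁, h, hinv]
    · rw [← h, hinv] at h₂
      exact absurd hγ₁ h₂
    · rw [h, hinv] at h₁
      exact absurd hγ₂ h₁
    · exact h

lemma isPos_rootAct_of_len_lt_len_mul_refl {a : AffW n} {i j : Fin n} (hij : i ≠ j) {k : ℤ}
    (hα : IsPos (i, j, k)) (hlen : len a < len (mul a (refl i j k))) :
    IsPos (rootAct a (i, j, k)) :=
  (isPos_or_isNeg (γ := rootAct a (i, j, k)) (a.perm.injective.ne hij)).resolve_right
    fun h => (len_mul_refl_le hij hα h).not_gt hlen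

def posMass (τ : Fin n → ℤ) : ℤ := ∑ i, max (τ i) 0

lemma posMass_le_posMass_mul_refl {a : AffW n} {i j : Fin n} (hij : i ≠ j) {k : ℤ}
    (hα : IsPos (i, j, k)) (haα : IsPos (rootAct a (i, j, k))) :
    posMass a.tr ≤ posMass (mul a (refl i j k)).tr := by
  set x := a.tr (a.perm i)
  set y := a.tr (a.perm j)
  have hk : 0 ≤ k := by rcases hα with h | ⟨h, -⟩ <;> dsimp only at h <;> omega
  have hxy : 0 ≤ k - x + y := by rcases haα with h | ⟨h, -⟩ <;> simp only [rootAct] at h <;> omega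
  have hdiff : posMass (mul a (refl i j k)).tr - posMass a.tr
      = (max (x - k) 0 - max x 0) + (max (y + k) 0 - max y 0) := by
    simp only [posMass, ← Finset.sum_sub_distrib]
    rw [← Equiv.sum_comp a.perm, Fintype.sum_eq_add i j hij]
    · simp [mul, refl, hij.symm, x, y, neg_add_eq_sub, add_comm k]
    · rintro m ⟨hmi, hmj⟩
      simp [mul, refl, hmi, hmj]
  omega

lemma posMass_le_of_bruhatStep {a b : AffW n} (h : BruhatStep a b) :
    posMass a.tr ≤ posMass b.tr := by
  obtain ⟨⟨i, j, k, hij, rfl⟩, hlen⟩ := h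
  rcases isPos_or_isNeg (γ := (i, j, k)) hij with hα | hα
  · exact posMass_le_posMass_mul_refl hij hα (isPos_rootAct_of_len_lt_len_mul_refl hij hα hlen)
  · rw [refl_symm hij] at hlen ⊢
    exact posMass_le_posMass_mul_refl hij.symm hα
      (isPos_rootAct_of_len_lt_len_mul_refl hij.symm hα hlen)

lemma posMass_le_of_bruhatLe {a b : AffW n} (h : BruhatLe a b) :
    posMass a.tr ≤ posMass b.tr := by
  induction h with
  | refl => exact le_rfl
  | tail _ hstep ih => exact ih.trans (posMass_le_of_bruhatStep hstep)

lemma posMass_nonpos_iff (τ : Fin n → ℤ) : posMass τ ≤ 0 ↔ ∀ i, τ i ≤ 0 := by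
  rw [posMass, ← not_lt, Finset.sum_pos_iff_of_nonneg fun i _ => le_max_right _ _]
  simp

end AffW

open AffW in
/-- If `μ ∈ ℕⁿ` and `λ ⪯ μ` in the modified Bruhat order
(`λ ⪯ μ ↔ -λ ≤ -μ`), then `λ ∈ ℕⁿ`. -/
theorem closed_under_prec (n : ℕ) (lam mu : Fin n → ℤ)
    (hmu : ∀ i, 0 ≤ mu i)
    (hle : XLe (fun i => -lam i) (fun i => -mu i)) :
    ∀ i, 0 ≤ lam i := by
  have hmu' : posMass (fun i => -mu i) ≤ 0 :=
    (posMass_nonpos_iff _).2 fun i => neg_nonpos.2 (hmu i)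
  have hlam : posMass (fun i => -lam i) ≤ 0 := (posMass_le_of_bruhatLe hle).trans hmu'
  intro i
  simpa using (posMass_nonpos_iff _).1 hlam i
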